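/- arXiv:0812.3007 — 8 statements merged into one kernel-verified Lean document; each statement's English description precedes it below -/
import Mathlib

section
/- Let z ≥ 1 and suppose f : S → [1,∞) is a measurable function with Φ_{z,κ}[f](x) ≤ f(x) for all x ∈ S. Then the pointwise limit g(x) = lim_{k→∞} Φ_{z,κ}^k[f](x) exists, satisfies 1 ≤ g(x) ≤ f(x) for all x ∈ S, and is a fixed point: Φ_{z,κ}[g] = g. -/
/-!
The iterates `Φ^[k] f` decrease because `Φ` is monotone and `Φ f ≤ f`, so they converge
pointwise to their infimum `g`, which lies between `1` and `f`. The integrands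
`κ(x,·)(Φ^[k] f - 1)` are dominated by `κ(x,·)(f - 1)`, whose integral is finite since
`Φ f ≤ f < ∞`; dominated convergence and continuity of `exp` then let `Φ` pass to the limit
in `Φ (Φ^[k] f) = Φ^[k+1] f`, giving `Φ g = g`.
-/

open MeasureTheory Filter
open scoped ENNReal

/-- Extended exponential on `ℝ≥0∞`, with `eexp ⊤ = ⊤`. -/
noncomputable def eexp (t : ℝ≥0∞) : ℝ≥0∞ :=
  if t = ⊤ then ⊤ else ENNReal.ofReal (Real.exp t.toReal)

/-- The nonlinear operator `Φ_{z,κ}[f](x) = z·exp(T_κ[f-1](x))`, acting on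
functions `f : S → [1,∞]`, with value `⊤` when the integral diverges. -/
noncomputable def Phi {S : Type*} [MeasurableSpace S] (μ : Measure S)
    (κ : S → S → ℝ) (z : ℝ) (f : S → ℝ≥0∞) : S → ℝ≥0∞ :=
  fun x => ENNReal.ofReal z * eexp (∫⁻ y, ENNReal.ofReal (κ x y) * (f y - 1) ∂μ)

open Topology

lemma eexp_top : eexp ⊤ = ⊤ := if_pos rfl

lemma monotone_eexp : Monotone eexp := by
  intro s t hst
  unfold eexp
  split_ifs with hs ht ht
  · exact le_top
  · exact absurd (top_le_iff.mp (hs ▸ hst)) ht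
  · exact le_top
  · exact ENNReal.ofReal_le_ofReal (Real.exp_le_exp.mpr (ENNReal.toReal_mono ht hst))

lemma one_le_eexp (t : ℝ≥0∞) : 1 ≤ eexp t := by
  unfold eexp
  split_ifs
  · exact le_top
  · exact ENNReal.one_le_ofReal.mpr (Real.one_le_exp ENNReal.toReal_nonneg)

lemma measurable_eexp : Measurable eexp :=
  Measurable.ite (measurableSet_singleton ⊤) measurable_const
    (ENNReal.measurable_ofReal.comp (Real.measurable_exp.comp ENNReal.measurable_toReal))

lemma continuousAt_eexp {a : ℝ≥0∞} (ha : a ≠ ⊤) : ContinuousAt eexp a := by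
  have hreal : ContinuousAt (fun t : ℝ≥0∞ => ENNReal.ofReal (Real.exp t.toReal)) a :=
    ENNReal.continuous_ofReal.continuousAt.comp
      (Real.continuous_exp.continuousAt.comp (ENNReal.tendsto_toReal ha))
  refine hreal.congr ?_
  filter_upwards [isOpen_ne.mem_nhds ha] with t ht
  simp only [eexp, if_neg ht]

section Phi

variable {S : Type*} [MeasurableSpace S] (μ : Measure S) (κ : S → S → ℝ) (z : ℝ)

lemma monotone_Phi : Monotone (Phi μ κ z) := fun _ _ hfg _ =>
  mul_le_mul_right
    (monotone_eexp (lintegral_mono fun y => mul_le_mul_right (tsub_le_tsub_right (hfg y) 1) _)) _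

lemma one_le_Phi (hz : 1 ≤ z) (f : S → ℝ≥0∞) (x : S) : 1 ≤ Phi μ κ z f x :=
  one_le_mul (ENNReal.one_le_ofReal.mpr hz) (one_le_eexp _)

lemma measurable_Phi [SFinite μ] (hκ : Measurable (Function.uncurry κ))
    {f : S → ℝ≥0∞} (hf : Measurable f) : Measurable (Phi μ κ z f) :=
  (measurable_eexp.comp (Measurable.lintegral_prod_right'
    (f := fun p : S × S => ENNReal.ofReal (κ p.1 p.2) * (f p.2 - 1))
    (hκ.ennreal_ofReal.mul ((hf.comp measurable_snd).sub measurable_const)))).const_mul _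

variable {μ κ z}

lemma lintegral_ne_top_of_Phi_ne_top (hz : 0 < z) {f : S → ℝ≥0∞} {x : S}
    (h : Phi μ κ z f x ≠ ⊤) : ∫⁻ y, ENNReal.ofReal (κ x y) * (f y - 1) ∂μ ≠ ⊤ := by
  intro htop
  apply h
  rw [Phi, htop, eexp_top, ENNReal.mul_top (ENNReal.ofReal_pos.mpr hz).ne']

lemma tendsto_Phi_iInf {F : ℕ → S → ℝ≥0∞} {x : S} (hz : 0 < z) (hκ : Measurable (κ x))
    (hF : ∀ k, Measurable (F k)) (hF_anti : Antitone F) (hF0 : Phi μ κ z (F 0) x ≠ ⊤) :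
    Tendsto (fun k => Phi μ κ z (F k) x) atTop (𝓝 (Phi μ κ z (fun y => ⨅ k, F k y) x)) := by
  have hbound := lintegral_ne_top_of_Phi_ne_top hz hF0
  have hlim_ne_top : ∫⁻ y, ENNReal.ofReal (κ x y) * ((⨅ k, F k y) - 1) ∂μ ≠ ⊤ :=
    ne_top_of_le_ne_top hbound <| lintegral_mono fun y =>
      mul_le_mul_right (tsub_le_tsub_right (iInf_le _ 0) 1) _
  have hint : Tendsto (fun k => ∫⁻ y, ENNReal.ofReal (κ x y) * (F k y - 1) ∂μ) atTop
      (𝓝 (∫⁻ y, ENNReal.ofReal (κ x y) * ((⨅ k, F k y) - 1) ∂μ)) := by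
    refine tendsto_lintegral_of_dominated_convergence _
      (fun k => hκ.ennreal_ofReal.mul ((hF k).sub measurable_const))
      (fun k => ae_of_all _ fun y =>
        mul_le_mul_right (tsub_le_tsub_right (hF_anti (Nat.zero_le k) y) 1) _)
      hbound (ae_of_all _ fun y => ?_)
    have hFy : Tendsto (fun k => F k y) atTop (𝓝 (⨅ k, F k y)) :=
      tendsto_atTop_iInf fun _ _ hkl => hF_anti hkl y
    exact ENNReal.Tendsto.const_mul (ENNReal.Tendsto.sub hFy tendsto_const_nhds (Or.inr ENNReal.one_ne_top))
      (Or.inr ENNReal.ofReal_ne_top)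
  exact ENNReal.Tendsto.const_mul ((continuousAt_eexp hlim_ne_top).tendsto.comp hint)
    (Or.inr ENNReal.ofReal_ne_top)

end Phi

theorem stmt0_general {S : Type*} [MeasurableSpace S]
    (μ : Measure S) [IsProbabilityMeasure μ]
    (κ : S → S → ℝ) (hκmeas : Measurable (Function.uncurry κ))
    (z : ℝ) (hz : 1 ≤ z)
    (f : S → ℝ≥0∞) (hfmeas : Measurable f)
    (hf1 : ∀ x, 1 ≤ f x) (hffin : ∀ x, f x ≠ ⊤)
    (hPhif : ∀ x, Phi μ κ z f x ≤ f x) :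
    ∃ g : S → ℝ≥0∞,
      (∀ x, Tendsto (fun k => (Phi μ κ z)^[k] f x) atTop (nhds (g x))) ∧
      (∀ x, 1 ≤ g x) ∧ (∀ x, g x ≤ f x) ∧
      Phi μ κ z g = g := by
  set F : ℕ → S → ℝ≥0∞ := fun k => (Phi μ κ z)^[k] f
  have hF_anti : Antitone F := (monotone_Phi μ κ z).antitone_iterate_of_map_le hPhif
  have hF_meas (k : ℕ) : Measurable (F k) :=
    Function.Iterate.rec Measurable hfmeas (fun _ => measurable_Phi μ κ z hκmeas) k
  have hF_one (k : ℕ) : ∀ x, 1 ≤ F k x :=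
    Function.Iterate.rec (fun h => ∀ x, 1 ≤ h x) hf1 (fun h _ => one_le_Phi μ κ z hz h) k
  have hF_tendsto (x : S) : Tendsto (fun k => F k x) atTop (𝓝 (⨅ k, F k x)) :=
    tendsto_atTop_iInf fun _ _ hkl => hF_anti hkl x
  refine ⟨fun x => ⨅ k, F k x, hF_tendsto, fun x => le_iInf fun k => hF_one k x,
    fun x => iInf_le _ 0, funext fun x => ?_⟩
  have hPhi_tendsto_Phi := tendsto_Phi_iInf (zero_lt_one.trans_le hz) hκmeas.of_uncurry_left
    hF_meas hF_anti (ne_top_of_le_ne_top (hffin x) (hPhif x))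
  have hPhi_tendsto_lim : Tendsto (fun k => Phi μ κ z (F k) x) atTop (𝓝 (⨅ k, F k x)) :=
    ((hF_tendsto x).comp (tendsto_add_atTop_nat 1)).congr fun k =>
      congrFun (Function.iterate_succ_apply' _ k f) x
  exact tendsto_nhds_unique hPhi_tendsto_Phi hPhi_tendsto_lim

theorem stmt0 {S : Type*} [MeasurableSpace S] [MetricSpace S] [BorelSpace S]
    [TopologicalSpace.SeparableSpace S]
    (μ : Measure S) [IsProbabilityMeasure μ]
    (κ : S → S → ℝ) (hκmeas : Measurable (Function.uncurry κ))
    (hκsymm : ∀ x y, κ x y = κ y x) (hκnonneg : ∀ x y, 0 ≤ κ x y)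
    (z : ℝ) (hz : 1 ≤ z)
    (f : S → ℝ≥0∞) (hfmeas : Measurable f)
    (hf1 : ∀ x, 1 ≤ f x) (hffin : ∀ x, f x ≠ ⊤)
    (hPhif : ∀ x, Phi μ κ z f x ≤ f x) :
    ∃ g : S → ℝ≥0∞,
      (∀ x, Tendsto (fun k => (Phi μ κ z)^[k] f x) atTop (nhds (g x))) ∧
      (∀ x, 1 ≤ g x) ∧ (∀ x, g x ≤ f x) ∧
      Phi μ κ z g = g :=
  stmt0_general μ κ hκmeas z hz f hfmeas hf1 hffin hPhif
end

section
/- Assume inf_{x,y∈S} κ(x,y) > 0 and let z ≥ 1. If f : S → [1,∞] satisfies Φ_{z,κ}[f] = f, then either f(x) = ∞ for μ-almost every x, or f(x) < ∞ for μ-almost every x; moreover, in the latter case f ∈ L¹(S,μ). -/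
open MeasureTheory Filter
open scoped ENNReal

section

variable {S : Type*} [MeasurableSpace S] {μ : Measure S}

theorem Phi_apply_eq_top {κ : S → S → ℝ} {z : ℝ} (hz : 0 < z) {f : S → ℝ≥0∞} {x : S}
    (h : ∫⁻ y, ENNReal.ofReal (κ x y) * (f y - 1) ∂μ = ⊤) : Phi μ κ z f x = ⊤ := by
  simp [Phi, h, eexp, ENNReal.mul_top, hz]

theorem lintegral_ofReal_mul_eq_top_of_le {k : S → ℝ} {b : ℝ} (hb : 0 < b) (hbk : ∀ y, b ≤ k y)
    {g : S → ℝ≥0∞} (hg : ∫⁻ y, g y ∂μ = ⊤) : ∫⁻ y, ENNReal.ofReal (k y) * g y ∂μ = ⊤ := by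
  refine top_le_iff.mp ?_
  calc ⊤ = ENNReal.ofReal b * ∫⁻ y, g y ∂μ := by
        rw [hg, ENNReal.mul_top (by simpa using hb)]
    _ = ∫⁻ y, ENNReal.ofReal b * g y ∂μ := (lintegral_const_mul' _ _ ENNReal.ofReal_ne_top).symm
    _ ≤ ∫⁻ y, ENNReal.ofReal (k y) * g y ∂μ :=
        lintegral_mono fun y => mul_le_mul_left (ENNReal.ofReal_le_ofReal (hbk y)) _

theorem lintegral_lt_top_of_lintegral_tsub_one_ne_top [IsFiniteMeasure μ] {f : S → ℝ≥0∞}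
    (hf : ∫⁻ x, (f x - 1) ∂μ ≠ ⊤) : ∫⁻ x, f x ∂μ < ⊤ :=
  calc ∫⁻ x, f x ∂μ ≤ ∫⁻ x, (f x - 1) + 1 ∂μ := lintegral_mono fun x => le_tsub_add
    _ = ∫⁻ x, (f x - 1) ∂μ + μ Set.univ := by
        rw [lintegral_add_right _ measurable_const, lintegral_one]
    _ < ⊤ := ENNReal.add_lt_top.mpr ⟨hf.lt_top, measure_lt_top μ _⟩

end

theorem stmt2_general {S : Type*} [MeasurableSpace S]
    (μ : Measure S) [IsProbabilityMeasure μ]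
    (κ : S → S → ℝ)
    (hκinf : ∃ b : ℝ, 0 < b ∧ ∀ x y, b ≤ κ x y)
    (z : ℝ) (hz : 1 ≤ z)
    (f : S → ℝ≥0∞) (hfmeas : Measurable f)
    (hfix : ∀ x, Phi μ κ z f x = f x) :
    (∀ᵐ x ∂μ, f x = ⊤) ∨ ((∀ᵐ x ∂μ, f x ≠ ⊤) ∧ ∫⁻ x, f x ∂μ < ⊤) := by
  obtain ⟨b, hb, hbκ⟩ := hκinf
  by_cases hJ : ∫⁻ y, (f y - 1) ∂μ = ⊤
  · refine .inl (ae_of_all _ fun x => ?_)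
    rw [← hfix x]
    exact Phi_apply_eq_top (by linarith) (lintegral_ofReal_mul_eq_top_of_le hb (hbκ x) hJ)
  · have hint := lintegral_lt_top_of_lintegral_tsub_one_ne_top hJ
    exact .inr ⟨(ae_lt_top hfmeas hint.ne).mono fun _ => ne_of_lt, hint⟩

theorem stmt2 {S : Type*} [MeasurableSpace S] [MetricSpace S] [BorelSpace S]
    [TopologicalSpace.SeparableSpace S]
    (μ : Measure S) [IsProbabilityMeasure μ]
    (κ : S → S → ℝ) (hκmeas : Measurable (Function.uncurry κ))
    (hκsymm : ∀ x y, κ x y = κ y x)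
    (hκinf : ∃ b : ℝ, 0 < b ∧ ∀ x y, b ≤ κ x y)
    (z : ℝ) (hz : 1 ≤ z)
    (f : S → ℝ≥0∞) (hfmeas : Measurable f) (hf1 : ∀ x, 1 ≤ f x)
    (hfix : ∀ x, Phi μ κ z f x = f x) :
    (∀ᵐ x ∂μ, f x = ⊤) ∨ ((∀ᵐ x ∂μ, f x ≠ ⊤) ∧ ∫⁻ x, f x ∂μ < ⊤) :=
  stmt2_general μ κ hκinf z hz f hfmeas hfix
end

section
/- Assume ‖T_κ‖_HS = λ < 1 and that ∫_S e^{a ψ(x)} dμ(x) < ∞ for some a > 0, where ψ(x) = (∫_S κ(x,y)² dμ(y))^{1/2}. Set λ₁ = λ + (1−λ)/2. Then there exists ε₀ > 0 such that for all 0 < ε < ε₀ and all x ∈ S, T_κ[e^{ε ψ} − 1](x) ≤ λ₁·ε·ψ(x). -/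
/-!
Since `e^t - 1 ≤ t + t² e^t` for `t ≥ 0`,
`T_κ[e^{εψ} - 1](x) ≤ ε T_κ[ψ](x) + ε² T_κ[ψ² e^{εψ}](x)`. By Cauchy–Schwarz in `y`,
`T_κ[g](x) ≤ ψ(x) ‖g‖₂`, and `‖ψ‖₂ = ‖T_κ‖_HS = λ`. For `ε ≤ a/4` the exponential moment
bounds `‖ψ² e^{εψ}‖₂` by a constant `δ`, so `T_κ[e^{εψ} - 1](x) ≤ εψ(x)(λ + εδ)`, and
`εδ ≤ (1 - λ)/2` once `ε` is small.
-/

open MeasureTheory Filter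
open scoped ENNReal

lemma Real.exp_sub_one_le_add_sq_mul_exp {t : ℝ} (ht : 0 ≤ t) :
    Real.exp t - 1 ≤ t + t ^ 2 * Real.exp t := by
  have h : Real.exp t - 1 ≤ t * Real.exp t := by
    nlinarith [Real.add_one_le_exp (-t), Real.exp_neg t, Real.exp_pos t,
      mul_inv_cancel₀ (Real.exp_pos t).ne']
  nlinarith [mul_le_mul_of_nonneg_left h ht]

lemma Real.sq_mul_exp_le {a ε s : ℝ} (ha : 0 < a) (hεa : ε ≤ a / 4) (hs : 0 ≤ s) :
    s ^ 2 * Real.exp (ε * s) ≤ 32 / a ^ 2 * Real.exp (a / 2 * s) := by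
  have hpoly : (a / 4 * s) ^ 2 / 2 ≤ Real.exp (a / 4 * s) := by
    simpa using Real.pow_div_factorial_le_exp _ (by positivity : 0 ≤ a / 4 * s) 2
  have hexp : Real.exp (ε * s) ≤ Real.exp (a / 4 * s) :=
    Real.exp_le_exp.mpr (mul_le_mul_of_nonneg_right hεa hs)
  have hsplit : Real.exp (a / 2 * s) = Real.exp (a / 4 * s) * Real.exp (a / 4 * s) := by
    rw [← Real.exp_add]; ring_nf
  have hs2 : s ^ 2 ≤ 32 / a ^ 2 * Real.exp (a / 4 * s) := by
    rw [div_mul_eq_mul_div, le_div_iff₀ (by positivity)]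
    nlinarith
  rw [hsplit, ← mul_assoc]
  exact mul_le_mul hs2 hexp (Real.exp_pos _).le (by positivity)

section

variable {α : Type*} [MeasurableSpace α] {μ : Measure α}

lemma ENNReal.lintegral_mul_le_of_lintegral_sq_le {f g : α → ℝ≥0∞}
    (hf : AEMeasurable f μ) (hg : AEMeasurable g μ) {A B : ℝ≥0∞}
    (hfA : ∫⁻ y, f y ^ 2 ∂μ ≤ A ^ 2) (hgB : ∫⁻ y, g y ^ 2 ∂μ ≤ B ^ 2) :
    ∫⁻ y, f y * g y ∂μ ≤ A * B := by
  have hsqrt : ∀ {h : α → ℝ≥0∞} {C : ℝ≥0∞}, ∫⁻ y, h y ^ 2 ∂μ ≤ C ^ 2 →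
      (∫⁻ y, h y ^ (2 : ℝ) ∂μ) ^ ((1 : ℝ) / 2) ≤ C := by
    intro h C hC
    simp_rw [ENNReal.rpow_two]
    calc (∫⁻ y, h y ^ 2 ∂μ) ^ ((1 : ℝ) / 2) ≤ (C ^ 2) ^ ((1 : ℝ) / 2) := by gcongr
      _ = C := by rw [← ENNReal.rpow_two, ← ENNReal.rpow_mul]; norm_num
  calc ∫⁻ y, f y * g y ∂μ
      ≤ (∫⁻ y, f y ^ (2 : ℝ) ∂μ) ^ ((1 : ℝ) / 2) * (∫⁻ y, g y ^ (2 : ℝ) ∂μ) ^ ((1 : ℝ) / 2) :=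
        ENNReal.lintegral_mul_le_Lp_mul_Lq μ Real.HolderConjugate.two_two hf hg
    _ ≤ A * B := by gcongr <;> exact hsqrt ‹_›

lemma lintegral_ofReal_sq {f : α → ℝ} (hf : Integrable (fun y => f y ^ 2) μ)
    (hf0 : ∀ y, 0 ≤ f y) :
    ∫⁻ y, ENNReal.ofReal (f y) ^ 2 ∂μ = ENNReal.ofReal (∫ y, f y ^ 2 ∂μ) := by
  rw [ofReal_integral_eq_lintegral_ofReal hf (Eventually.of_forall fun y => sq_nonneg _)]
  exact lintegral_congr fun y => (ENNReal.ofReal_pow (hf0 y) 2).symm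

lemma lintegral_mul_exp_sub_one_le {k φ : α → ℝ} (hk : AEMeasurable k μ)
    (hφ : AEMeasurable φ μ) (hφ0 : ∀ y, 0 ≤ φ y) {ε : ℝ} (hε : 0 ≤ ε) :
    ∫⁻ y, ENNReal.ofReal (k y) * ENNReal.ofReal (Real.exp (ε * φ y) - 1) ∂μ
      ≤ ENNReal.ofReal ε * ∫⁻ y, ENNReal.ofReal (k y) * ENNReal.ofReal (φ y) ∂μ
        + ENNReal.ofReal (ε ^ 2) * ∫⁻ y, ENNReal.ofReal (k y)
            * ENNReal.ofReal (φ y ^ 2 * Real.exp (ε * φ y)) ∂μ := by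
  rw [← lintegral_const_mul' _ _ ENNReal.ofReal_ne_top,
    ← lintegral_const_mul' _ _ ENNReal.ofReal_ne_top,
    ← lintegral_add_left' (by fun_prop : AEMeasurable
      (fun y => ENNReal.ofReal ε * (ENNReal.ofReal (k y) * ENNReal.ofReal (φ y))) μ)]
  refine lintegral_mono fun y => ?_
  have ht : 0 ≤ ε * φ y := mul_nonneg hε (hφ0 y)
  have hbound : ENNReal.ofReal (Real.exp (ε * φ y) - 1)
      ≤ ENNReal.ofReal ε * ENNReal.ofReal (φ y)
        + ENNReal.ofReal (ε ^ 2) * ENNReal.ofReal (φ y ^ 2 * Real.exp (ε * φ y)) := by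
    rw [← ENNReal.ofReal_mul hε, ← ENNReal.ofReal_mul (sq_nonneg ε),
      ← ENNReal.ofReal_add ht (by positivity)]
    refine ENNReal.ofReal_le_ofReal ?_
    linarith [Real.exp_sub_one_le_add_sq_mul_exp ht]
  calc ENNReal.ofReal (k y) * ENNReal.ofReal (Real.exp (ε * φ y) - 1)
      ≤ ENNReal.ofReal (k y) * (ENNReal.ofReal ε * ENNReal.ofReal (φ y)
        + ENNReal.ofReal (ε ^ 2) * ENNReal.ofReal (φ y ^ 2 * Real.exp (ε * φ y))) := by
        gcongr
    _ = _ := by ring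

lemma lintegral_mul_exp_sub_one_le_mul_add {k φ : α → ℝ} (hk : AEMeasurable k μ)
    (hφ : AEMeasurable φ μ) (hφ0 : ∀ y, 0 ≤ φ y) {ε A L D : ℝ} (hε : 0 ≤ ε) (hA : 0 ≤ A)
    (hL : 0 ≤ L) (hD : 0 ≤ D) (hkA : ∫⁻ y, ENNReal.ofReal (k y) ^ 2 ∂μ ≤ ENNReal.ofReal A ^ 2)
    (hφL : ∫⁻ y, ENNReal.ofReal (φ y) ^ 2 ∂μ ≤ ENNReal.ofReal L ^ 2)
    (hφD : ∫⁻ y, ENNReal.ofReal (φ y ^ 2 * Real.exp (ε * φ y)) ^ 2 ∂μ ≤ ENNReal.ofReal D ^ 2) :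
    ∫⁻ y, ENNReal.ofReal (k y) * ENNReal.ofReal (Real.exp (ε * φ y) - 1) ∂μ
      ≤ ENNReal.ofReal (ε * A * (L + ε * D)) := by
  calc _ ≤ ENNReal.ofReal ε * ∫⁻ y, ENNReal.ofReal (k y) * ENNReal.ofReal (φ y) ∂μ
        + ENNReal.ofReal (ε ^ 2) * ∫⁻ y, ENNReal.ofReal (k y)
            * ENNReal.ofReal (φ y ^ 2 * Real.exp (ε * φ y)) ∂μ :=
        lintegral_mul_exp_sub_one_le hk hφ hφ0 hε
    _ ≤ ENNReal.ofReal ε * (ENNReal.ofReal A * ENNReal.ofReal L)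
        + ENNReal.ofReal (ε ^ 2) * (ENNReal.ofReal A * ENNReal.ofReal D) := by
        gcongr <;> refine ENNReal.lintegral_mul_le_of_lintegral_sq_le hk.ennreal_ofReal
          (by fun_prop) hkA ?_
        exacts [hφL, hφD]
    _ = ENNReal.ofReal (ε * A * (L + ε * D)) := by
        simp only [← ENNReal.ofReal_mul hA, ← ENNReal.ofReal_mul hε,
          ← ENNReal.ofReal_mul (sq_nonneg ε)]
        rw [← ENNReal.ofReal_add (by positivity) (by positivity)]
        ring_nf

lemma lintegral_sq_mul_exp_sq_le {ψ : α → ℝ} (hψ0 : ∀ y, 0 ≤ ψ y) {a ε : ℝ} (ha : 0 < a)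
    (hεa : ε ≤ a / 4) (hexp : Integrable (fun y => Real.exp (a * ψ y)) μ) :
    ∫⁻ y, ENNReal.ofReal (ψ y ^ 2 * Real.exp (ε * ψ y)) ^ 2 ∂μ
      ≤ ENNReal.ofReal (32 / a ^ 2 * √(∫ y, Real.exp (a * ψ y) ∂μ)) ^ 2 := by
  have hmoment : ENNReal.ofReal (32 / a ^ 2 * √(∫ y, Real.exp (a * ψ y) ∂μ)) ^ 2
      = ∫⁻ y, ENNReal.ofReal ((32 / a ^ 2) ^ 2 * Real.exp (a * ψ y)) ∂μ := by
    rw [← ofReal_integral_eq_lintegral_ofReal (hexp.const_mul _)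
        (Eventually.of_forall fun y => by positivity),
      integral_const_mul, ← ENNReal.ofReal_pow (by positivity), mul_pow,
      Real.sq_sqrt (integral_nonneg fun y => (Real.exp_pos _).le)]
  rw [hmoment]
  refine lintegral_mono fun y => ?_
  rw [← ENNReal.ofReal_pow (by positivity)]
  refine ENNReal.ofReal_le_ofReal ?_
  have hexp_sq : Real.exp (a / 2 * ψ y) ^ 2 = Real.exp (a * ψ y) := by
    rw [← Real.exp_nat_mul]; ring_nf
  rw [← hexp_sq, ← mul_pow]
  exact pow_le_pow_left₀ (by positivity) (Real.sq_mul_exp_le ha hεa (hψ0 y)) 2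

end

theorem stmt4_general {S : Type*} [MeasurableSpace S]
    (μ : Measure S) [IsProbabilityMeasure μ]
    (κ : S → S → ℝ) (hκmeas : Measurable (Function.uncurry κ))
    (hκnonneg : ∀ x y, 0 ≤ κ x y)
    (hκ2 : ∀ x, Integrable (fun y => κ x y ^ 2) μ)
    (ψ : S → ℝ) (hψ : ∀ x, ψ x = Real.sqrt (∫ y, κ x y ^ 2 ∂μ))
    (lam : ℝ) (hlam0 : 0 ≤ lam) (hlam1 : lam < 1)
    (hHS : (∫⁻ x, ∫⁻ y, ENNReal.ofReal (κ x y) ^ 2 ∂μ ∂μ) ^ ((1 : ℝ) / 2)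
      = ENNReal.ofReal lam)
    (a : ℝ) (ha : 0 < a)
    (hexp : Integrable (fun x => Real.exp (a * ψ x)) μ) :
    ∃ ε₀ : ℝ, 0 < ε₀ ∧ ∀ ε : ℝ, 0 < ε → ε < ε₀ → ∀ x : S,
      ∫⁻ y, ENNReal.ofReal (κ x y) * ENNReal.ofReal (Real.exp (ε * ψ y) - 1) ∂μ
        ≤ ENNReal.ofReal ((lam + (1 - lam) / 2) * ε * ψ x) := by
  have hψ0 : ∀ x, 0 ≤ ψ x := fun x => hψ x ▸ Real.sqrt_nonneg _
  have hψmeas : Measurable ψ := by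
    rw [funext hψ]
    exact ((hκmeas.pow_const 2).stronglyMeasurable.integral_prod_right').measurable.sqrt
  have hrow : ∀ x, ∫⁻ y, ENNReal.ofReal (κ x y) ^ 2 ∂μ = ENNReal.ofReal (ψ x) ^ 2 := fun x => by
    rw [lintegral_ofReal_sq (hκ2 x) (hκnonneg x), ← ENNReal.ofReal_pow (hψ0 x), hψ x,
      Real.sq_sqrt (integral_nonneg fun y => sq_nonneg _)]
  have hψL2 : ∫⁻ x, ENNReal.ofReal (ψ x) ^ 2 ∂μ = ENNReal.ofReal lam ^ 2 := by
    simp_rw [← hrow, ← hHS, ← ENNReal.rpow_two, ← ENNReal.rpow_mul]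
    norm_num
  set δ := 32 / a ^ 2 * √(∫ y, Real.exp (a * ψ y) ∂μ)
  have hδ0 : 0 ≤ δ := by positivity
  refine ⟨min (a / 4) ((1 - lam) / (2 * (δ + 1))),
    lt_min (by positivity) (div_pos (by linarith) (by positivity)), fun ε hε hεlt x => ?_⟩
  have hεa : ε ≤ a / 4 := hεlt.le.trans (min_le_left _ _)
  have hεδ : ε * δ ≤ (1 - lam) / 2 := by
    have h := hεlt.trans_le (min_le_right _ _)
    rw [lt_div_iff₀ (by positivity)] at h
    nlinarith
  calc _ ≤ ENNReal.ofReal (ε * ψ x * (lam + ε * δ)) :=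
        lintegral_mul_exp_sub_one_le_mul_add (hκmeas.comp measurable_prodMk_left).aemeasurable
          hψmeas.aemeasurable hψ0 hε.le (hψ0 x) hlam0 hδ0 (hrow x).le hψL2.le
          (lintegral_sq_mul_exp_sq_le hψ0 ha hεa hexp)
    _ ≤ ENNReal.ofReal ((lam + (1 - lam) / 2) * ε * ψ x) := by
        refine ENNReal.ofReal_le_ofReal ?_
        nlinarith [mul_le_mul_of_nonneg_right hεδ (mul_nonneg hε.le (hψ0 x))]

theorem stmt4 {S : Type*} [MeasurableSpace S] [MetricSpace S] [BorelSpace S]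
    [TopologicalSpace.SeparableSpace S]
    (μ : Measure S) [IsProbabilityMeasure μ]
    (κ : S → S → ℝ) (hκmeas : Measurable (Function.uncurry κ))
    (hκsymm : ∀ x y, κ x y = κ y x) (hκnonneg : ∀ x y, 0 ≤ κ x y)
    (hκ2 : ∀ x, Integrable (fun y => κ x y ^ 2) μ)
    (ψ : S → ℝ) (hψ : ∀ x, ψ x = Real.sqrt (∫ y, κ x y ^ 2 ∂μ))
    (lam : ℝ) (hlam0 : 0 ≤ lam) (hlam1 : lam < 1)
    (hHS : (∫⁻ x, ∫⁻ y, ENNReal.ofReal (κ x y) ^ 2 ∂μ ∂μ) ^ ((1 : ℝ) / 2)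
      = ENNReal.ofReal lam)
    (a : ℝ) (ha : 0 < a)
    (hexp : Integrable (fun x => Real.exp (a * ψ x)) μ) :
    ∃ ε₀ : ℝ, 0 < ε₀ ∧ ∀ ε : ℝ, 0 < ε → ε < ε₀ → ∀ x : S,
      ∫⁻ y, ENNReal.ofReal (κ x y) * ENNReal.ofReal (Real.exp (ε * ψ y) - 1) ∂μ
        ≤ ENNReal.ofReal ((lam + (1 - lam) / 2) * ε * ψ x) :=
  stmt4_general μ κ hκmeas hκnonneg hκ2 ψ hψ lam hlam0 hlam1 hHS a ha hexp
end

section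
/- Assume inf_{x,y∈S} κ(x,y) > 0 and ∫_S κ(x,y) dμ(y) < ∞ for every x ∈ S. If ‖T_κ‖ ≥ 1 then r*_κ = 1; that is, for no z > 1 does the equation g = z·e^{T_κ[g−1]} have a μ-a.e. finite measurable solution g ≥ 1. -/
open MeasureTheory Filter
open scoped ENNReal

/-- The `L²(μ)` operator norm of the integral operator `T_κ`. -/
noncomputable def opNorm {S : Type*} [MeasurableSpace S] (μ : Measure S)
    (κ : S → S → ℝ) : ℝ≥0∞ :=
  ⨆ (f : S → ℝ≥0∞) (_ : Measurable f) (_ : (∫⁻ x, f x ^ 2 ∂μ) ^ ((1 : ℝ) / 2) ≤ 1),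
    (∫⁻ x, (∫⁻ y, ENNReal.ofReal (κ x y) * f y ∂μ) ^ 2 ∂μ) ^ ((1 : ℝ) / 2)

/-- `r*_κ`: the supremum of the set of `z ≥ 1` for which the equation
`g = z·e^{T_κ[g−1]}` has a `μ`-a.e. finite measurable solution `g ≥ 1`. -/
noncomputable def rstar {S : Type*} [MeasurableSpace S] (μ : Measure S)
    (κ : S → S → ℝ) : ℝ :=
  sSup {z : ℝ | 1 ≤ z ∧ ∃ g : S → ℝ≥0∞, Measurable g ∧ (∀ x, 1 ≤ g x) ∧
    (∀ᵐ x ∂μ, g x ≠ ⊤) ∧ (∀ᵐ x ∂μ, Phi μ κ z g x = g x)}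

/-!
If `g = z·e^{T[g-1]}` with `z > 1`, then `f = g - 1` satisfies `f ≥ z - 1 > 0` and, by
`e^t ≥ 1 + t`, `z·T f ≤ f`. A strictly positive, a.e. finite function with `T f ≤ z⁻¹ f` is a
Schur test function for the symmetric kernel: by Cauchy–Schwarz with weight `f`,
`(T h)² ≤ T f · T (h²/f)`, and integrating and using symmetry gives `‖T h‖₂ ≤ z⁻¹ ‖h‖₂`.
Hence `‖T‖ ≤ z⁻¹ < 1`.
-/

section SchurTest

variable {S : Type*} [MeasurableSpace S]

theorem sq_lintegral_mul_le {w f h : S → ℝ≥0∞} {ν : Measure S}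
    (hw : AEMeasurable w ν) (hf : AEMeasurable f ν) (hh : AEMeasurable h ν)
    (hf0 : ∀ᵐ y ∂ν, f y ≠ 0) (hftop : ∀ᵐ y ∂ν, f y ≠ ⊤) :
    (∫⁻ y, w y * h y ∂ν) ^ 2 ≤ (∫⁻ y, w y * f y ∂ν) * ∫⁻ y, w y * (h y ^ 2 / f y) ∂ν := by
  set u : S → ℝ≥0∞ := fun y => (w y * f y) ^ (2⁻¹ : ℝ)
  set v : S → ℝ≥0∞ := fun y => (w y * (h y ^ 2 / f y)) ^ (2⁻¹ : ℝ)
  have hsq : ∀ a : ℝ≥0∞, (a ^ (2⁻¹ : ℝ)) ^ (2 : ℝ) = a := ENNReal.rpow_inv_rpow two_ne_zero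
  have huv : ∀ᵐ y ∂ν, w y * h y = (u * v) y := by
    filter_upwards [hf0, hftop] with y hy0 hytop
    calc w y * h y = ((w y * h y) ^ 2) ^ (2⁻¹ : ℝ) := by
          rw [← ENNReal.rpow_two, ← ENNReal.rpow_mul]; norm_num
      _ = (w y * f y * (w y * (h y ^ 2 / f y))) ^ (2⁻¹ : ℝ) := by
          rw [mul_mul_mul_comm, mul_comm (f y), ENNReal.div_mul_cancel hy0 hytop]
          congr 1; ring
      _ = (u * v) y := ENNReal.mul_rpow_of_nonneg _ _ (by norm_num)
  have hu : AEMeasurable u ν := (hw.mul hf).pow_const _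
  have hv : AEMeasurable v ν := (hw.mul ((hh.pow_const 2).div hf)).pow_const _
  have holder := ENNReal.lintegral_mul_le_Lp_mul_Lq ν Real.HolderConjugate.two_two hu hv
  simp only [u, v, hsq, one_div] at holder
  calc (∫⁻ y, w y * h y ∂ν) ^ 2 = (∫⁻ y, (u * v) y ∂ν) ^ (2 : ℝ) := by
        rw [lintegral_congr_ae huv, ENNReal.rpow_two]
    _ ≤ _ := by
        grw [holder, ENNReal.mul_rpow_of_nonneg _ _ zero_le_two, hsq, hsq]

variable {μ : Measure S} {K : S → S → ℝ≥0∞}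

noncomputable def kernelOp (μ : Measure S) (K : S → S → ℝ≥0∞) (h : S → ℝ≥0∞) (x : S) : ℝ≥0∞ :=
  ∫⁻ y, K x y * h y ∂μ

theorem measurable_kernelOp [SFinite μ] (hK : Measurable (Function.uncurry K))
    {h : S → ℝ≥0∞} (hh : Measurable h) : Measurable (kernelOp μ K h) :=
  Measurable.lintegral_prod_right' (hK.mul (hh.comp measurable_snd))

theorem lintegral_mul_kernelOp_comm [SFinite μ] (hK : Measurable (Function.uncurry K))
    (hsymm : ∀ x y, K x y = K y x) {u v : S → ℝ≥0∞} (hu : Measurable u) (hv : Measurable v) :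
    ∫⁻ x, u x * kernelOp μ K v x ∂μ = ∫⁻ x, v x * kernelOp μ K u x ∂μ := by
  have hint : ∀ (a b : S → ℝ≥0∞), Measurable b → ∀ x,
      a x * kernelOp μ K b x = ∫⁻ y, a x * K x y * b y ∂μ := fun a b hb x => by
    simp only [kernelOp, mul_assoc]
    exact (lintegral_const_mul _ (hK.of_uncurry_left.mul hb)).symm
  simp only [hint u v hv, hint v u hu]
  rw [lintegral_lintegral_swap ((hu.comp measurable_fst).mul hK |>.mul
    (hv.comp measurable_snd)).aemeasurable]
  simp only [hsymm, mul_comm, mul_left_comm]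

theorem lintegral_kernelOp_sq_le [SFinite μ] (hK : Measurable (Function.uncurry K))
    (hsymm : ∀ x y, K x y = K y x) {f : S → ℝ≥0∞} (hf : Measurable f)
    (hf0 : ∀ᵐ y ∂μ, f y ≠ 0) (hftop : ∀ᵐ y ∂μ, f y ≠ ⊤) {c : ℝ≥0∞}
    (hTf : ∀ᵐ x ∂μ, kernelOp μ K f x ≤ c * f x) {h : S → ℝ≥0∞} (hh : Measurable h) :
    ∫⁻ x, kernelOp μ K h x ^ 2 ∂μ ≤ c ^ 2 * ∫⁻ x, h x ^ 2 ∂μ := by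
  set q : S → ℝ≥0∞ := fun y => h y ^ 2 / f y
  have hq : Measurable q := (hh.pow_const 2).div hf
  have hqf : ∀ᵐ y ∂μ, q y * f y = h y ^ 2 := by
    filter_upwards [hf0, hftop] with y hy0 hytop using ENNReal.div_mul_cancel hy0 hytop
  calc ∫⁻ x, kernelOp μ K h x ^ 2 ∂μ
      ≤ ∫⁻ x, kernelOp μ K f x * kernelOp μ K q x ∂μ := lintegral_mono fun x =>
        sq_lintegral_mul_le hK.of_uncurry_left.aemeasurable hf.aemeasurable hh.aemeasurable
          hf0 hftop
    _ ≤ ∫⁻ x, c * (f x * kernelOp μ K q x) ∂μ := lintegral_mono_ae <| hTf.mono fun x hx => by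
        rw [← mul_assoc]; gcongr
    _ = c * ∫⁻ x, q x * kernelOp μ K f x ∂μ := by
        have hm : Measurable fun x => f x * kernelOp μ K q x := hf.mul (measurable_kernelOp hK hq)
        rw [lintegral_const_mul _ hm,
          lintegral_mul_kernelOp_comm hK hsymm hf hq]
    _ ≤ c * ∫⁻ x, c * h x ^ 2 ∂μ := by
        gcongr c * ?_
        refine lintegral_mono_ae <| (hTf.and hqf).mono fun x ⟨hx, hqx⟩ => ?_
        calc q x * kernelOp μ K f x ≤ q x * (c * f x) := by gcongr
          _ = c * h x ^ 2 := by rw [← hqx]; ring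
    _ = c ^ 2 * ∫⁻ x, h x ^ 2 ∂μ := by
        rw [lintegral_const_mul _ (hh.pow_const 2), ← mul_assoc, sq]

end SchurTest

section FixedPoint

variable {S : Type*} [MeasurableSpace S] {μ : Measure S} {κ : S → S → ℝ}

theorem opNorm_le_of_lintegral_sq_le {c : ℝ≥0∞}
    (hT : ∀ h : S → ℝ≥0∞, Measurable h →
      ∫⁻ x, kernelOp μ (fun x y => ENNReal.ofReal (κ x y)) h x ^ 2 ∂μ ≤
        c ^ 2 * ∫⁻ x, h x ^ 2 ∂μ) :
    opNorm μ κ ≤ c := by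
  refine iSup₂_le fun h hh => iSup_le fun hnorm => ?_
  have hsqrt : ∀ a : ℝ≥0∞, (a ^ 2) ^ ((1 : ℝ) / 2) = a := fun a => by
    rw [← ENNReal.rpow_two, ← ENNReal.rpow_mul]; norm_num
  have hh2 : ∫⁻ x, h x ^ 2 ∂μ ≤ 1 := by
    simpa using (ENNReal.rpow_le_rpow_iff (z := 1 / 2) (by norm_num)).1 (by simpa using hnorm)
  calc (∫⁻ x, (∫⁻ y, ENNReal.ofReal (κ x y) * h y ∂μ) ^ 2 ∂μ) ^ ((1 : ℝ) / 2)
      ≤ (c ^ 2 * 1) ^ ((1 : ℝ) / 2) := by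
        gcongr
        exact (hT h hh).trans (by gcongr)
    _ = c := by rw [mul_one, hsqrt]

theorem ofReal_mul_le_mul_eexp_sub_one {z : ℝ} (hz : 1 < z) {t : ℝ≥0∞}
    (ht : ENNReal.ofReal z * eexp t ≠ ⊤) :
    ENNReal.ofReal z * t ≤ ENNReal.ofReal z * eexp t - 1 ∧
      0 < ENNReal.ofReal z * eexp t - 1 := by
  have htop : t ≠ ⊤ := by
    rintro rfl
    simp [eexp, ENNReal.mul_top, (by linarith : (0 : ℝ) < z)] at ht
  obtain ⟨r, hr, rfl⟩ : ∃ r : ℝ, 0 ≤ r ∧ t = ENNReal.ofReal r :=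
    ⟨t.toReal, ENNReal.toReal_nonneg, (ENNReal.ofReal_toReal htop).symm⟩
  have he : ENNReal.ofReal z * eexp (ENNReal.ofReal r) - 1 =
      ENNReal.ofReal (z * Real.exp r - 1) := by
    rw [eexp, if_neg ENNReal.ofReal_ne_top, ENNReal.toReal_ofReal hr,
      ← ENNReal.ofReal_mul (by linarith), ENNReal.ofReal_sub _ zero_le_one, ENNReal.ofReal_one]
  have hexp := Real.add_one_le_exp r
  rw [he, ← ENNReal.ofReal_mul (by linarith)]
  exact ⟨ENNReal.ofReal_le_ofReal (by nlinarith), ENNReal.ofReal_pos.2 (by nlinarith)⟩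

theorem opNorm_le_inv_of_fixedPoint [SFinite μ] (hκmeas : Measurable (Function.uncurry κ))
    (hκsymm : ∀ x y, κ x y = κ y x) {z : ℝ} (hz : 1 < z) {g : S → ℝ≥0∞} (hg : Measurable g)
    (hfin : ∀ᵐ x ∂μ, g x ≠ ⊤) (hfix : ∀ᵐ x ∂μ, Phi μ κ z g x = g x) :
    opNorm μ κ ≤ (ENNReal.ofReal z)⁻¹ := by
  set K : S → S → ℝ≥0∞ := fun x y => ENNReal.ofReal (κ x y)
  set f : S → ℝ≥0∞ := fun y => g y - 1
  have hbound : ∀ᵐ x ∂μ, ENNReal.ofReal z * kernelOp μ K f x ≤ f x ∧ 0 < f x ∧ f x ≠ ⊤ := by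
    filter_upwards [hfin, hfix] with x hx hPhi
    have hfx : f x = ENNReal.ofReal z * eexp (kernelOp μ K f x) - 1 := by
      change g x - 1 = _; rw [← hPhi]; rfl
    have hne : ENNReal.ofReal z * eexp (kernelOp μ K f x) ≠ ⊤ := by
      rwa [← hPhi] at hx
    obtain ⟨hle, hpos⟩ := ofReal_mul_le_mul_eexp_sub_one hz hne
    rw [hfx]
    exact ⟨hle, hpos, ENNReal.sub_ne_top hne⟩
  have hz0 : ENNReal.ofReal z ≠ 0 := (ENNReal.ofReal_pos.2 (by linarith)).ne'
  have hK : Measurable (Function.uncurry K) := ENNReal.measurable_ofReal.comp hκmeas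
  refine opNorm_le_of_lintegral_sq_le fun h hh =>
    lintegral_kernelOp_sq_le hK (fun x y => by simp only [K, hκsymm x y])
      (hg.sub measurable_const) (hbound.mono fun x hx => hx.2.1.ne')
      (hbound.mono fun x hx => hx.2.2) ?_ hh
  filter_upwards [hbound] with x hx
  exact (ENNReal.mul_le_iff_le_inv hz0 ENNReal.ofReal_ne_top).1 hx.1

theorem rstar_eq_one_of_forall_not_exists
    (h : ∀ z : ℝ, 1 < z → ¬ ∃ g : S → ℝ≥0∞, Measurable g ∧ (∀ x, 1 ≤ g x) ∧
      (∀ᵐ x ∂μ, g x ≠ ⊤) ∧ (∀ᵐ x ∂μ, Phi μ κ z g x = g x)) :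
    rstar μ κ = 1 := by
  refine IsGreatest.csSup_eq ⟨⟨le_rfl, 1, measurable_const, fun _ => le_rfl,
    ae_of_all _ fun _ => ENNReal.one_ne_top, ae_of_all _ fun x => ?_⟩, fun w ⟨_, hw⟩ => ?_⟩
  · simp [Phi, eexp]
  · by_contra! hw1
    exact h w hw1 hw

end FixedPoint

theorem stmt9_general {S : Type*} [MeasurableSpace S]
    (μ : Measure S) [IsProbabilityMeasure μ]
    (κ : S → S → ℝ) (hκmeas : Measurable (Function.uncurry κ))
    (hκsymm : ∀ x y, κ x y = κ y x)
    (hnorm : 1 ≤ opNorm μ κ) :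
    rstar μ κ = 1 ∧
    ∀ z : ℝ, 1 < z → ¬ ∃ g : S → ℝ≥0∞, Measurable g ∧ (∀ x, 1 ≤ g x) ∧
      (∀ᵐ x ∂μ, g x ≠ ⊤) ∧ (∀ᵐ x ∂μ, Phi μ κ z g x = g x) := by
  have hnone : ∀ z : ℝ, 1 < z → ¬ ∃ g : S → ℝ≥0∞, Measurable g ∧ (∀ x, 1 ≤ g x) ∧
      (∀ᵐ x ∂μ, g x ≠ ⊤) ∧ (∀ᵐ x ∂μ, Phi μ κ z g x = g x) := by
    rintro z hz ⟨g, hg, -, hfin, hfix⟩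
    have hlt : (ENNReal.ofReal z)⁻¹ < 1 := ENNReal.inv_lt_one.2 (ENNReal.one_lt_ofReal.2 hz)
    exact (hnorm.trans (opNorm_le_inv_of_fixedPoint hκmeas hκsymm hz hg hfin hfix)).not_gt hlt
  exact ⟨rstar_eq_one_of_forall_not_exists hnone, hnone⟩

theorem stmt9 {S : Type*} [MeasurableSpace S] [MetricSpace S] [BorelSpace S]
    [TopologicalSpace.SeparableSpace S]
    (μ : Measure S) [IsProbabilityMeasure μ]
    (κ : S → S → ℝ) (hκmeas : Measurable (Function.uncurry κ))
    (hκsymm : ∀ x y, κ x y = κ y x)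
    (hκinf : ∃ b : ℝ, 0 < b ∧ ∀ x y, b ≤ κ x y)
    (hR : ∀ x, Integrable (fun y => κ x y) μ)
    (hnorm : 1 ≤ opNorm μ κ) :
    rstar μ κ = 1 ∧
    ∀ z : ℝ, 1 < z → ¬ ∃ g : S → ℝ≥0∞, Measurable g ∧ (∀ x, 1 ≤ g x) ∧
      (∀ᵐ x ∂μ, g x ≠ ⊤) ∧ (∀ᵐ x ∂μ, Phi μ κ z g x = g x) :=
  stmt9_general μ κ hκmeas hκsymm hnorm
end

section
/- Let h : S → (1,∞) be a μ-a.e. finite measurable function with h = e^{T_κ[h−1]} on S and h* := inf_{x∈S} h(x) > 1. Then there exist ε ∈ (0,1) and z > 1 such that the function H = ε + (1−ε)h satisfies z·e^{T_κ[H−1]}(x) ≤ H(x) for all x ∈ S; in fact one may take any ε ∈ (0,1) and z = (ε + (1−ε)h*)/(h*)^{1−ε}. -/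
/-!
With `H = ε + (1 - ε) h`, linearity of `T_κ` and the fixed-point equation give
`exp (T_κ[H - 1]) = h ^ (1 - ε)`, so the claim is `z ≤ φ (h x)` for
`φ t = (ε + (1 - ε) t) / t ^ (1 - ε)`. By Bernoulli's inequality `φ` is increasing on `[1, ∞)`
with `φ 1 = 1`, hence `z = φ h*` works and exceeds `1` as soon as `h* > 1`.
-/

open MeasureTheory Set

namespace Real

lemma rpow_one_sub_le_add_mul {ε r : ℝ} (hε₀ : 0 ≤ ε) (hε₁ : ε ≤ 1) (hr : 0 ≤ r) :
    r ^ (1 - ε) ≤ ε + (1 - ε) * r := by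
  have := rpow_one_add_le_one_add_mul_self (s := r - 1) (by linarith) (p := 1 - ε)
    (by linarith) (by linarith)
  rw [add_sub_cancel] at this
  linarith

lemma rpow_one_sub_lt_add_mul {ε r : ℝ} (hε₀ : 0 < ε) (hε₁ : ε < 1) (hr : 0 ≤ r) (hr₁ : r ≠ 1) :
    r ^ (1 - ε) < ε + (1 - ε) * r := by
  have := rpow_one_add_lt_one_add_mul_self (s := r - 1) (by linarith) (sub_ne_zero.2 hr₁)
    (p := 1 - ε) (by linarith) (by linarith)
  rw [add_sub_cancel] at this
  linarith

end Real

noncomputable def affineRpowRatio (ε t : ℝ) : ℝ := (ε + (1 - ε) * t) / t ^ (1 - ε)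

section affineRpowRatio

variable {ε : ℝ}

lemma affineRpowRatio_mul_rpow {t : ℝ} (ht : 0 < t) :
    affineRpowRatio ε t * t ^ (1 - ε) = ε + (1 - ε) * t :=
  div_mul_cancel₀ _ (Real.rpow_pos_of_pos ht _).ne'

lemma one_lt_affineRpowRatio (hε₀ : 0 < ε) (hε₁ : ε < 1) {t : ℝ} (ht : 1 < t) :
    1 < affineRpowRatio ε t :=
  (one_lt_div (Real.rpow_pos_of_pos (by linarith) _)).2
    (Real.rpow_one_sub_lt_add_mul hε₀ hε₁ (by linarith) ht.ne')

lemma monotoneOn_affineRpowRatio (hε₀ : 0 ≤ ε) (hε₁ : ε ≤ 1) :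
    MonotoneOn (affineRpowRatio ε) (Ici 1) := by
  intro a (ha : 1 ≤ a) t (ht : 1 ≤ t) hat
  set r := t / a
  have hr : 1 ≤ r := (one_le_div (by linarith)).2 hat
  have ht_eq : t = a * r := by simp only [r]; field_simp
  set R := r ^ (1 - ε)
  have hRr : R ≤ r := by
    simpa using Real.rpow_le_rpow_of_exponent_le hr (show 1 - ε ≤ 1 by linarith)
  have hbernoulli : R ≤ ε + (1 - ε) * r := Real.rpow_one_sub_le_add_mul hε₀ hε₁ (by linarith)
  rw [← mul_le_mul_iff_left₀ (Real.rpow_pos_of_pos (show 0 < t by linarith) (1 - ε)),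
    affineRpowRatio_mul_rpow (by linarith), ht_eq, Real.mul_rpow (by linarith) (by linarith),
    ← mul_assoc, affineRpowRatio_mul_rpow (by linarith)]
  -- `(ε + (1 - ε) a r) - (ε + (1 - ε) a) R = (ε + (1 - ε) r - R) + (1 - ε)(a - 1)(r - R)`
  nlinarith [mul_nonneg (mul_nonneg (sub_nonneg.2 hε₁) (sub_nonneg.2 ha)) (sub_nonneg.2 hRr)]

end affineRpowRatio

lemma integral_mul_affine_sub_one {S : Type*} [MeasurableSpace S] (μ : Measure S)
    (g f : S → ℝ) (ε : ℝ) :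
    ∫ y, g y * ((ε + (1 - ε) * f y) - 1) ∂μ = (1 - ε) * ∫ y, g y * (f y - 1) ∂μ := by
  rw [← integral_const_mul]
  congr 1 with y
  ring

theorem stmt12_general {S : Type*} [MeasurableSpace S]
    (μ : Measure S)
    (κ : S → S → ℝ)
    (h : S → ℝ)
    (hheq : ∀ x, h x = Real.exp (∫ y, κ x y * (h y - 1) ∂μ))
    (hstar : ℝ) (hglb : IsGLB (Set.range h) hstar) (hstar1 : 1 < hstar) :
    (∃ ε : ℝ, 0 < ε ∧ ε < 1 ∧ ∃ z : ℝ, 1 < z ∧ ∀ x,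
      z * Real.exp (∫ y, κ x y * ((ε + (1 - ε) * h y) - 1) ∂μ) ≤ ε + (1 - ε) * h x) ∧
    (∀ ε : ℝ, 0 < ε → ε < 1 →
      1 < (ε + (1 - ε) * hstar) / hstar ^ (1 - ε) ∧
      ∀ x, ((ε + (1 - ε) * hstar) / hstar ^ (1 - ε)) *
          Real.exp (∫ y, κ x y * ((ε + (1 - ε) * h y) - 1) ∂μ)
        ≤ ε + (1 - ε) * h x) := by
  have supersolution : ∀ ε : ℝ, 0 < ε → ε < 1 → 1 < affineRpowRatio ε hstar ∧
      ∀ x, affineRpowRatio ε hstar * Real.exp (∫ y, κ x y * ((ε + (1 - ε) * h y) - 1) ∂μ)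
        ≤ ε + (1 - ε) * h x := by
    intro ε hε₀ hε₁
    refine ⟨one_lt_affineRpowRatio hε₀ hε₁ hstar1, fun x => ?_⟩
    have hx : hstar ≤ h x := hglb.1 ⟨x, rfl⟩
    rw [integral_mul_affine_sub_one, mul_comm (1 - ε), Real.exp_mul, ← hheq x]
    calc affineRpowRatio ε hstar * h x ^ (1 - ε)
        ≤ affineRpowRatio ε (h x) * h x ^ (1 - ε) := by
          gcongr
          · exact Real.rpow_nonneg (by linarith) _
          · exact monotoneOn_affineRpowRatio hε₀.le hε₁.le hstar1.le
              (hstar1.le.trans hx : 1 ≤ h x) hx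
      _ = ε + (1 - ε) * h x := affineRpowRatio_mul_rpow (by linarith)
  exact ⟨⟨1 / 2, by norm_num, by norm_num, _, supersolution (1 / 2) (by norm_num) (by norm_num)⟩,
    supersolution⟩

theorem stmt12 {S : Type*} [MeasurableSpace S] [MetricSpace S] [BorelSpace S]
    [TopologicalSpace.SeparableSpace S]
    (μ : Measure S) [IsProbabilityMeasure μ]
    (κ : S → S → ℝ) (hκmeas : Measurable (Function.uncurry κ))
    (hκsymm : ∀ x y, κ x y = κ y x) (hκnonneg : ∀ x y, 0 ≤ κ x y)
    (h : S → ℝ) (hhmeas : Measurable h) (hh1 : ∀ x, 1 < h x)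
    (hhint : ∀ x, Integrable (fun y => κ x y * (h y - 1)) μ)
    (hheq : ∀ x, h x = Real.exp (∫ y, κ x y * (h y - 1) ∂μ))
    (hstar : ℝ) (hglb : IsGLB (Set.range h) hstar) (hstar1 : 1 < hstar) :
    (∃ ε : ℝ, 0 < ε ∧ ε < 1 ∧ ∃ z : ℝ, 1 < z ∧ ∀ x,
      z * Real.exp (∫ y, κ x y * ((ε + (1 - ε) * h y) - 1) ∂μ) ≤ ε + (1 - ε) * h x) ∧
    (∀ ε : ℝ, 0 < ε → ε < 1 →
      1 < (ε + (1 - ε) * hstar) / hstar ^ (1 - ε) ∧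
      ∀ x, ((ε + (1 - ε) * hstar) / hstar ^ (1 - ε)) *
          Real.exp (∫ y, κ x y * ((ε + (1 - ε) * h y) - 1) ∂μ)
        ≤ ε + (1 - ε) * h x) :=
  stmt12_general μ κ h hheq hstar hglb hstar1
end

section
/- For a constant c > 0 the following are equivalent: (a) there exist z > 1 and a finite real number g > 1 with g = z·e^{c(g−1)}; (b) the equation f = 1 − e^{−c f} has a strictly negative real solution f; (c) c < 1. -/
/-!
Both equations are compared with the tangent line of the exponential at `0`. If `c ≥ 1`, the
strict convexity bound `exp x > 1 + x` rules out a solution. If `c < 1`, the same bound at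
`x = c - 1` gives `c < exp (c - 1)`, which makes `g = 1 / c` work in the first equation and
makes `φ x = 1 - exp (-(c x)) - x` positive at `x = 1 - 1 / c`; the quadratic bound
`exp y ≥ 1 + y + y ^ 2 / 2` makes `φ` negative at `x = -2 / c ^ 2`, and the intermediate value
theorem produces a negative root in between.
-/

open Real Set

lemma lt_exp_sub_one {c : ℝ} (hc : c ≠ 1) : c < exp (c - 1) := by
  linarith [add_one_lt_exp (sub_ne_zero.mpr hc)]

lemma lt_one_of_eq_mul_exp {c z g : ℝ} (hz : 1 < z) (hg : 1 < g)
    (hgz : g = z * exp (c * (g - 1))) : c < 1 := by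
  have hexp : exp (c * (g - 1)) < g :=
    (lt_mul_of_one_lt_left (exp_pos _) hz).trans_eq hgz.symm
  have : c * (g - 1) < 1 * (g - 1) := by linarith [add_one_le_exp (c * (g - 1))]
  exact lt_of_mul_lt_mul_right this (by linarith)

lemma exists_eq_mul_exp_of_lt_one {c : ℝ} (hc : 0 < c) (hc1 : c < 1) :
    ∃ z : ℝ, 1 < z ∧ ∃ g : ℝ, 1 < g ∧ g = z * exp (c * (g - 1)) := by
  refine ⟨exp (c - 1) / c, (one_lt_div hc).mpr (lt_exp_sub_one hc1.ne), 1 / c,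
    one_lt_one_div hc hc1, ?_⟩
  rw [div_mul_eq_mul_div, ← exp_add, show c - 1 + c * (1 / c - 1) = 0 by field_simp; ring,
    exp_zero]

lemma lt_one_of_neg_eq_one_sub_exp {c f : ℝ} (hf : f < 0) (hfe : f = 1 - exp (-(c * f))) :
    c < 1 := by
  by_contra! hc
  have hcf : -(c * f) ≠ 0 := by nlinarith
  nlinarith [add_one_lt_exp hcf]

lemma exists_neg_eq_one_sub_exp {c : ℝ} (hc : 0 < c) (hc1 : c < 1) :
    ∃ f : ℝ, f < 0 ∧ f = 1 - exp (-(c * f)) := by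
  set φ : ℝ → ℝ := fun x => 1 - exp (-(c * x)) - x
  have hb : 1 - 1 / c < 0 := by
    have := one_lt_one_div hc hc1
    linarith
  have hab : -2 / c ^ 2 ≤ 1 - 1 / c := by
    have : 0 ≤ 1 - 1 / c - -2 / c ^ 2 := by
      rw [show 1 - 1 / c - -2 / c ^ 2 = ((c - 1 / 2) ^ 2 + 7 / 4) / c ^ 2 by field_simp; ring]
      positivity
    linarith
  have hφb : 0 < φ (1 - 1 / c) := by
    have hexp : exp (1 - c) < 1 / c := by
      rw [show 1 - c = -(c - 1) by ring, exp_neg, one_div]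
      exact inv_strictAnti₀ hc (lt_exp_sub_one hc1.ne)
    simp only [φ, show -(c * (1 - 1 / c)) = 1 - c by field_simp; ring]
    linarith
  have hφa : φ (-2 / c ^ 2) < 0 := by
    have hy : -(c * (-2 / c ^ 2)) = 2 / c := by field_simp
    have hexp := quadratic_le_exp_of_nonneg (by positivity : (0 : ℝ) ≤ 2 / c)
    have : (2 / c) ^ 2 / 2 = -(-2 / c ^ 2) := by field_simp
    simp only [φ, hy]
    linarith [div_pos two_pos hc]
  obtain ⟨f, hfab, hφf⟩ : ∃ f ∈ Icc (-2 / c ^ 2) (1 - 1 / c), φ f = 0 :=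
    intermediate_value_Icc hab (by fun_prop) ⟨hφa.le, hφb.le⟩
  refine ⟨f, hfab.2.trans_lt hb, ?_⟩
  simp only [φ] at hφf
  linarith

theorem stmt13 (c : ℝ) (hc : 0 < c) :
    ((∃ z : ℝ, 1 < z ∧ ∃ g : ℝ, 1 < g ∧ g = z * Real.exp (c * (g - 1))) ↔ c < 1) ∧
    ((∃ f : ℝ, f < 0 ∧ f = 1 - Real.exp (-(c * f))) ↔ c < 1) :=
  ⟨⟨fun ⟨_, hz, _, hg, hgz⟩ => lt_one_of_eq_mul_exp hz hg hgz, exists_eq_mul_exp_of_lt_one hc⟩,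
    ⟨fun ⟨_, hf, hfe⟩ => lt_one_of_neg_eq_one_sub_exp hf hfe, exists_neg_eq_one_sub_exp hc⟩⟩
end

section
/- Assume inf_{x,y∈S} κ(x,y) > 0, ‖T_κ‖_HS < ∞, S ⊆ ℝ, κ(x,y) is non-decreasing in each argument, and κ(x,y) ≤ c₁·T_κ[1](x)·T_κ[1](y) for all x,y ∈ S and some constant c₁ > 0. Let λ = ‖T_κ‖ and let φ ∈ L²(S,μ) be non-negative with ‖φ‖_{L²(μ)} = 1 and T_κ φ = λ φ. Then, with c₂ = ∫_S φ dμ > 0 and ψ(x) = (∫_S κ(x,y)² dμ(y))^{1/2}: (i) (c₂/λ)·T_κ[1](x) ≤ φ(x) ≤ (1/λ)·ψ(x) for all x ∈ S; (ii) ψ(x)/φ(x) ≤ c₁·λ·‖T_κ‖_HS/c₂ for all x ∈ S; and (iii) inf_{x∈S} φ(x) > 0. -/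
/-!
Everything is read off the eigen-equation `λ φ(x) = ∫ κ(x,y) φ(y) dμ(y)`. Since `κ ≥ b > 0`,
`λ φ ≥ b ∫ φ > 0`, so `λ > 0` and `φ` is bounded below. Monotonicity of `κ` in `x` makes `φ`
non-decreasing, so `κ(x,·)` and `φ` are similarly ordered and Chebyshev's integral inequality gives
`T_κ[1](x) ∫ φ ≤ λ φ(x)`. Cauchy–Schwarz with `‖φ‖₂ = 1` gives `λ φ ≤ ψ`. Finally
`κ(x,·) ≤ c₁ T_κ[1](x) T_κ[1]` gives `ψ(x) ≤ c₁ T_κ[1](x) ‖T_κ[1]‖₂`, and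
`‖T_κ[1]‖₂ ≤ ‖ψ‖₂ = ‖T_κ‖_HS` because `T_κ[1] ≤ ψ` (Cauchy–Schwarz against `1`).
-/

open MeasureTheory Filter
open scoped ENNReal

section

variable {α : Type*} [MeasurableSpace α] {μ : Measure α}

lemma integral_mul_le_sqrt_mul_sqrt {f g : α → ℝ} (hf0 : 0 ≤ᵐ[μ] f) (hg0 : 0 ≤ᵐ[μ] g)
    (hf : MemLp f 2 μ) (hg : MemLp g 2 μ) :
    ∫ x, f x * g x ∂μ ≤ √(∫ x, f x ^ 2 ∂μ) * √(∫ x, g x ^ 2 ∂μ) := by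
  have := integral_mul_le_Lp_mul_Lq_of_nonneg Real.HolderConjugate.two_two hf0 hg0
    (by simpa using hf) (by simpa using hg)
  simpa only [Real.sqrt_eq_rpow, Real.rpow_two] using this

lemma MeasureTheory.MemLp.integral_sq_eq {f : α → ℝ} (hf : MemLp f 2 μ) :
    ∫ x, f x ^ 2 ∂μ = (eLpNorm f 2 μ).toReal ^ 2 := by
  rw [hf.eLpNorm_eq_integral_rpow_norm two_ne_zero ENNReal.ofNat_ne_top,
    ENNReal.toReal_ofReal (by positivity)]
  simp only [ENNReal.toReal_ofNat, Real.norm_eq_abs, Real.rpow_two, sq_abs]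
  rw [← Real.rpow_natCast, ← Real.rpow_mul (integral_nonneg fun x => sq_nonneg _)]
  norm_num

lemma sqrt_integral_sq_le_of_le_mul {f g : α → ℝ} {c : ℝ} (hc : 0 ≤ c)
    (hg : Integrable (fun x => g x ^ 2) μ) (hf0 : ∀ x, 0 ≤ f x) (hfg : ∀ x, f x ≤ c * g x) :
    √(∫ x, f x ^ 2 ∂μ) ≤ c * √(∫ x, g x ^ 2 ∂μ) := by
  have hsq : ∫ x, f x ^ 2 ∂μ ≤ c ^ 2 * ∫ x, g x ^ 2 ∂μ := by
    rw [← integral_const_mul]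
    refine integral_mono_of_nonneg (ae_of_all _ fun x => sq_nonneg _) (hg.const_mul _)
      (ae_of_all _ fun x => ?_)
    simpa [mul_pow] using pow_le_pow_left₀ (hf0 x) (hfg x) 2
  calc √(∫ x, f x ^ 2 ∂μ) ≤ √(c ^ 2 * ∫ x, g x ^ 2 ∂μ) := Real.sqrt_le_sqrt hsq
    _ = c * √(∫ x, g x ^ 2 ∂μ) := by rw [Real.sqrt_mul (sq_nonneg c), Real.sqrt_sq hc]

lemma integral_pos_of_eLpNorm_ne_zero {f : α → ℝ} {p : ℝ≥0∞} (hf0 : ∀ x, 0 ≤ f x)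
    (hf : Integrable f μ) (h : eLpNorm f p μ ≠ 0) : 0 < ∫ x, f x ∂μ :=
  (integral_nonneg hf0).lt_of_ne fun h' => h <| by
    rw [eLpNorm_congr_ae ((integral_eq_zero_iff_of_nonneg hf0 hf).1 h'.symm)]
    exact eLpNorm_zero

lemma integral_le_sqrt_integral_sq [IsProbabilityMeasure μ] {f : α → ℝ} (hf0 : 0 ≤ᵐ[μ] f)
    (hf : MemLp f 2 μ) : ∫ x, f x ∂μ ≤ √(∫ x, f x ^ 2 ∂μ) := by
  simpa using integral_mul_le_sqrt_mul_sqrt hf0 (ae_of_all μ fun _ => zero_le_one)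
    hf (memLp_const (1 : ℝ))

theorem Monovary.integral_mul_integral_le_integral_mul [IsProbabilityMeasure μ] {f g : α → ℝ}
    (hfg : Monovary f g) (hf : Integrable f μ) (hg : Integrable g μ)
    (hfg' : Integrable (fun x => f x * g x) μ) :
    (∫ x, f x ∂μ) * ∫ x, g x ∂μ ≤ ∫ x, f x * g x ∂μ := by
  have h1 : Integrable (fun _ : α => (1 : ℝ)) μ := integrable_const 1
  have hdiag : Integrable (fun p : α × α => f p.1 * g p.1 * 1 + 1 * (f p.2 * g p.2)) (μ.prod μ) :=
    (hfg'.mul_prod h1).add (h1.mul_prod hfg')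
  have hcross : Integrable (fun p : α × α => f p.1 * g p.2 + g p.1 * f p.2) (μ.prod μ) :=
    (hf.mul_prod hg).add (hg.mul_prod hf)
  have hexpand : ∫ p, (f p.1 - f p.2) * (g p.1 - g p.2) ∂μ.prod μ
      = 2 * ∫ x, f x * g x ∂μ - 2 * ((∫ x, f x ∂μ) * ∫ x, g x ∂μ) := by
    calc ∫ p, (f p.1 - f p.2) * (g p.1 - g p.2) ∂μ.prod μ
        = ∫ p, (f p.1 * g p.1 * 1 + 1 * (f p.2 * g p.2)) - (f p.1 * g p.2 + g p.1 * f p.2)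
            ∂μ.prod μ := integral_congr_ae (ae_of_all _ fun p => by ring)
      _ = _ := by
        rw [integral_sub hdiag hcross, integral_add (hfg'.mul_prod h1) (h1.mul_prod hfg'),
          integral_add (hf.mul_prod hg) (hg.mul_prod hf), integral_prod_mul (fun x => f x * g x) (fun _ => (1 : ℝ)),
          integral_prod_mul (fun _ => (1 : ℝ)) (fun x => f x * g x), integral_prod_mul f g,
          integral_prod_mul g f]
        simp only [integral_const, probReal_univ, smul_eq_mul, one_mul]
        ring
  have hnonneg : 0 ≤ ∫ p, (f p.1 - f p.2) * (g p.1 - g p.2) ∂μ.prod μ :=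
    integral_nonneg fun p => hfg.sub_mul_sub_nonneg p.2 p.1
  linarith

lemma integrable_integral_sq_and_integral_eq_sq_of_lintegral {β : Type*} [MeasurableSpace β]
    {ν : Measure β} [SFinite ν] {κ : α → β → ℝ} (hκ : Measurable (Function.uncurry κ))
    (hκ0 : ∀ x y, 0 ≤ κ x y) (hκ2 : ∀ x, Integrable (fun y => κ x y ^ 2) ν) {L : ℝ} (hL : 0 ≤ L)
    (h : (∫⁻ x, ∫⁻ y, ENNReal.ofReal (κ x y) ^ 2 ∂ν ∂μ) ^ ((1 : ℝ) / 2) = ENNReal.ofReal L) :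
    Integrable (fun x => ∫ y, κ x y ^ 2 ∂ν) μ ∧ ∫ x, ∫ y, κ x y ^ 2 ∂ν ∂μ = L ^ 2 := by
  have hrow : ∀ x, ∫⁻ y, ENNReal.ofReal (κ x y) ^ 2 ∂ν = ENNReal.ofReal (∫ y, κ x y ^ 2 ∂ν) :=
    fun x => by
      rw [ofReal_integral_eq_lintegral_ofReal (hκ2 x) (ae_of_all _ fun y => sq_nonneg _)]
      exact lintegral_congr fun y => (ENNReal.ofReal_pow (hκ0 x y) 2).symm
  have hlin : ∫⁻ x, ENNReal.ofReal (∫ y, κ x y ^ 2 ∂ν) ∂μ = ENNReal.ofReal (L ^ 2) := by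
    have := congrArg (· ^ (2 : ℝ)) h
    simp only [hrow, ← ENNReal.rpow_mul] at this
    norm_num at this
    rw [this, ENNReal.ofReal_pow hL]
  have hnonneg : 0 ≤ᵐ[μ] fun x => ∫ y, κ x y ^ 2 ∂ν :=
    ae_of_all _ fun x => integral_nonneg fun y => sq_nonneg _
  refine ⟨⟨(hκ.pow_const 2).stronglyMeasurable.integral_prod_right'.aestronglyMeasurable, ?_⟩, ?_⟩
  · rw [hasFiniteIntegral_iff_ofReal hnonneg, hlin]
    exact ENNReal.ofReal_lt_top
  · rw [integral_eq_lintegral_of_nonneg_ae hnonneg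
      (hκ.pow_const 2).stronglyMeasurable.integral_prod_right'.aestronglyMeasurable, hlin,
      ENNReal.toReal_ofReal (sq_nonneg L)]

end

section Kernel

variable {S : Type*} [MeasurableSpace S] {μ : Measure S} {κ : S → S → ℝ} {φ : S → ℝ} {lam : ℝ}

lemma monotone_of_integral_mul_eq_mul [Preorder S] (hκ : ∀ y, Monotone (κ · y))
    (hφ0 : ∀ x, 0 ≤ φ x) (hκφ : ∀ x, Integrable (fun y => κ x y * φ y) μ) (hlam : 0 < lam)
    (heig : ∀ x, ∫ y, κ x y * φ y ∂μ = lam * φ x) : Monotone φ := fun x x' hxx' =>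
  le_of_mul_le_mul_left (heig x ▸ heig x' ▸ integral_mono (hκφ x) (hκφ x') fun y =>
    mul_le_mul_of_nonneg_right (hκ y hxx') (hφ0 y)) hlam

lemma mul_integral_le_of_integral_mul_eq_mul {b : ℝ} {x : S} (hb : ∀ y, b ≤ κ x y)
    (hφ0 : ∀ y, 0 ≤ φ y) (hφ : Integrable φ μ) (hκφ : Integrable (fun y => κ x y * φ y) μ)
    (heig : ∫ y, κ x y * φ y ∂μ = lam * φ x) : b * ∫ y, φ y ∂μ ≤ lam * φ x := by
  rw [← heig, ← integral_const_mul]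
  exact integral_mono (hφ.const_mul b) hκφ fun y => mul_le_mul_of_nonneg_right (hb y) (hφ0 y)

lemma integral_mul_integral_le_of_integral_mul_eq_mul [LinearOrder S] [IsProbabilityMeasure μ]
    (hκ₁ : ∀ y, Monotone (κ · y)) (hκ₂ : ∀ x, Monotone (κ x)) (hφ0 : ∀ x, 0 ≤ φ x)
    (hκ : ∀ x, Integrable (κ x) μ) (hφ : Integrable φ μ)
    (hκφ : ∀ x, Integrable (fun y => κ x y * φ y) μ) (hlam : 0 < lam)
    (heig : ∀ x, ∫ y, κ x y * φ y ∂μ = lam * φ x) (x : S) :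
    (∫ y, κ x y ∂μ) * ∫ y, φ y ∂μ ≤ lam * φ x :=
  heig x ▸ ((hκ₂ x).monovary (monotone_of_integral_mul_eq_mul hκ₁ hφ0 hκφ hlam heig)
    ).integral_mul_integral_le_integral_mul (hκ x) hφ (hκφ x)

lemma sqrt_integral_sq_le_mul_integral [IsProbabilityMeasure μ]
    (hκ : Measurable (Function.uncurry κ)) (hκ0 : ∀ x y, 0 ≤ κ x y)
    (hκ2 : ∀ x, Integrable (fun y => κ x y ^ 2) μ) {c L : ℝ} (hc : 0 ≤ c) (hL : 0 ≤ L)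
    (hHS : (∫⁻ x, ∫⁻ y, ENNReal.ofReal (κ x y) ^ 2 ∂μ ∂μ) ^ ((1 : ℝ) / 2) = ENNReal.ofReal L)
    (hκT : ∀ x y, κ x y ≤ c * (∫ z, κ x z ∂μ) * ∫ z, κ y z ∂μ) (x : S) :
    √(∫ y, κ x y ^ 2 ∂μ) ≤ c * L * ∫ y, κ x y ∂μ := by
  set T : S → ℝ := fun x => ∫ y, κ x y ∂μ
  set ψ : S → ℝ := fun x => √(∫ y, κ x y ^ 2 ∂μ)
  have hT0 : ∀ x, 0 ≤ T x := fun x => integral_nonneg (hκ0 x)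
  have hψsq : ∀ x, ψ x ^ 2 = ∫ y, κ x y ^ 2 ∂μ := fun x =>
    Real.sq_sqrt (integral_nonneg fun y => sq_nonneg _)
  obtain ⟨hψint, hψL⟩ := integrable_integral_sq_and_integral_eq_sq_of_lintegral hκ hκ0 hκ2 hL hHS
  simp_rw [← hψsq] at hψint hψL
  have hTψ : ∀ x, T x ≤ ψ x := fun x => integral_le_sqrt_integral_sq (ae_of_all _ (hκ0 x))
    ((memLp_two_iff_integrable_sq hκ.of_uncurry_left.aestronglyMeasurable).2 (hκ2 x))
  have hTint : Integrable (fun x => T x ^ 2) μ :=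
    hψint.mono' (hκ.stronglyMeasurable.integral_prod_right'.aestronglyMeasurable.pow 2)
      (ae_of_all _ fun x => by
        simpa [abs_of_nonneg (hT0 x)] using pow_le_pow_left₀ (hT0 x) (hTψ x) 2)
  have hTL : √(∫ x, T x ^ 2 ∂μ) ≤ L := by
    simpa [hψL, Real.sqrt_sq hL] using
      sqrt_integral_sq_le_of_le_mul zero_le_one hψint hT0 (by simpa using hTψ)
  calc ψ x ≤ c * T x * √(∫ x, T x ^ 2 ∂μ) :=
        sqrt_integral_sq_le_of_le_mul (mul_nonneg hc (hT0 x)) hTint (hκ0 x) (hκT x)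
    _ ≤ c * T x * L := by gcongr; exact mul_nonneg hc (hT0 x)
    _ = c * L * T x := by ring

end Kernel

theorem stmt17_general (S : Set ℝ) (μ : Measure S) [IsProbabilityMeasure μ]
    (κ : S → S → ℝ) (hκmeas : Measurable (Function.uncurry κ))
    (hκnonneg : ∀ x y, 0 ≤ κ x y)
    (hκinf : ∃ b : ℝ, 0 < b ∧ ∀ x y, b ≤ κ x y)
    (hmono₁ : ∀ x x' y : S, (x : ℝ) ≤ (x' : ℝ) → κ x y ≤ κ x' y)
    (hmono₂ : ∀ x y y' : S, (y : ℝ) ≤ (y' : ℝ) → κ x y ≤ κ x y')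
    (c₁ : ℝ) (hc₁ : 0 < c₁)
    (T1 : S → ℝ) (hT1 : ∀ x, T1 x = ∫ y, κ x y ∂μ)
    (hTT : ∀ x y, κ x y ≤ c₁ * T1 x * T1 y)
    (hκ2 : ∀ x, Integrable (fun y => κ x y ^ 2) μ)
    (ψ : S → ℝ) (hψ : ∀ x, ψ x = Real.sqrt (∫ y, κ x y ^ 2 ∂μ))
    (lamHS : ℝ) (hlamHS0 : 0 ≤ lamHS)
    (hHS : (∫⁻ x, ∫⁻ y, ENNReal.ofReal (κ x y) ^ 2 ∂μ ∂μ) ^ ((1 : ℝ) / 2)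
      = ENNReal.ofReal lamHS)
    (lam : ℝ)
    (φ : S → ℝ) (hφnonneg : ∀ x, 0 ≤ φ x)
    (hφL2 : MemLp φ 2 μ) (hφnorm : eLpNorm φ 2 μ = 1)
    (hφeig : ∀ x, ∫ y, κ x y * φ y ∂μ = lam * φ x) :
    0 < ∫ x, φ x ∂μ ∧
    (∀ x, ((∫ x', φ x' ∂μ) / lam) * T1 x ≤ φ x) ∧
    (∀ x, φ x ≤ (1 / lam) * ψ x) ∧
    (∀ x, ψ x / φ x ≤ c₁ * lam * lamHS / (∫ x', φ x' ∂μ)) ∧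
    (∃ c₀ : ℝ, 0 < c₀ ∧ ∀ x, c₀ ≤ φ x) := by
  obtain ⟨b, hb, hbκ⟩ := hκinf
  have hκL2 : ∀ x, MemLp (κ x) 2 μ := fun x =>
    (memLp_two_iff_integrable_sq hκmeas.of_uncurry_left.aestronglyMeasurable).2 (hκ2 x)
  have hφint : Integrable φ μ := hφL2.integrable one_le_two
  have hκφ : ∀ x, Integrable (fun y => κ x y * φ y) μ := fun x => (hκL2 x).integrable_mul hφL2
  set c₂ := ∫ x, φ x ∂μ
  have hc₂ : 0 < c₂ := integral_pos_of_eLpNorm_ne_zero hφnonneg hφint (hφnorm ▸ one_ne_zero)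
  have hbφ : ∀ x, b * c₂ ≤ lam * φ x := fun x =>
    mul_integral_le_of_integral_mul_eq_mul (hbκ x) hφnonneg hφint (hκφ x) (hφeig x)
  obtain ⟨x₀⟩ := nonempty_of_isProbabilityMeasure μ
  have hlam : 0 < lam := pos_of_mul_pos_left ((mul_pos hb hc₂).trans_le (hbφ x₀)) (hφnonneg x₀)
  have hφpos : ∀ x, 0 < φ x := fun x =>
    pos_of_mul_pos_right ((mul_pos hb hc₂).trans_le (hbφ x)) hlam.le
  have hT1φ : ∀ x, T1 x * c₂ ≤ lam * φ x := fun x => hT1 x ▸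
    integral_mul_integral_le_of_integral_mul_eq_mul (fun y x x' h => hmono₁ x x' y h)
      (fun x y y' h => hmono₂ x y y' h) hφnonneg (fun x => (hκL2 x).integrable one_le_two)
      hφint hκφ hlam hφeig x
  have hφψ : ∀ x, lam * φ x ≤ ψ x := fun x => by
    simpa [hφeig, hφL2.integral_sq_eq, hφnorm, ← hψ] using integral_mul_le_sqrt_mul_sqrt
      (ae_of_all _ (hκnonneg x)) (ae_of_all _ hφnonneg) (hκL2 x) hφL2
  have hψT1 : ∀ x, ψ x ≤ c₁ * lamHS * T1 x := fun x => by
    simpa [hψ, hT1] using sqrt_integral_sq_le_mul_integral hκmeas hκnonneg hκ2 hc₁.le hlamHS0 hHS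
      (by simpa [hT1] using hTT) x
  refine ⟨hc₂, fun x => ?_, fun x => ?_, fun x => ?_, ⟨b * c₂ / lam, by positivity, fun x => ?_⟩⟩
  · rw [div_mul_eq_mul_div, div_le_iff₀ hlam]
    linarith [hT1φ x]
  · rw [one_div_mul_eq_div, le_div_iff₀ hlam]
    linarith [hφψ x]
  · rw [div_le_div_iff₀ (hφpos x) hc₂]
    nlinarith [mul_le_mul_of_nonneg_right (hψT1 x) hc₂.le,
      mul_le_mul_of_nonneg_left (hT1φ x) (mul_nonneg hc₁.le hlamHS0)]
  · rw [div_le_iff₀ hlam]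
    linarith [hbφ x]

theorem stmt17 (S : Set ℝ) (μ : Measure S) [IsProbabilityMeasure μ]
    (κ : S → S → ℝ) (hκmeas : Measurable (Function.uncurry κ))
    (hκsymm : ∀ x y, κ x y = κ y x) (hκnonneg : ∀ x y, 0 ≤ κ x y)
    (hκinf : ∃ b : ℝ, 0 < b ∧ ∀ x y, b ≤ κ x y)
    (hmono₁ : ∀ x x' y : S, (x : ℝ) ≤ (x' : ℝ) → κ x y ≤ κ x' y)
    (hmono₂ : ∀ x y y' : S, (y : ℝ) ≤ (y' : ℝ) → κ x y ≤ κ x y')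
    (c₁ : ℝ) (hc₁ : 0 < c₁)
    (T1 : S → ℝ) (hT1 : ∀ x, T1 x = ∫ y, κ x y ∂μ)
    (hTT : ∀ x y, κ x y ≤ c₁ * T1 x * T1 y)
    (hκ2 : ∀ x, Integrable (fun y => κ x y ^ 2) μ)
    (ψ : S → ℝ) (hψ : ∀ x, ψ x = Real.sqrt (∫ y, κ x y ^ 2 ∂μ))
    (lamHS : ℝ) (hlamHS0 : 0 ≤ lamHS)
    (hHS : (∫⁻ x, ∫⁻ y, ENNReal.ofReal (κ x y) ^ 2 ∂μ ∂μ) ^ ((1 : ℝ) / 2)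
      = ENNReal.ofReal lamHS)
    (lam : ℝ) (hlam0 : 0 ≤ lam) (hlam : opNorm μ κ = ENNReal.ofReal lam)
    (φ : S → ℝ) (hφmeas : Measurable φ) (hφnonneg : ∀ x, 0 ≤ φ x)
    (hφL2 : MemLp φ 2 μ) (hφnorm : eLpNorm φ 2 μ = 1)
    (hφeig : ∀ x, ∫ y, κ x y * φ y ∂μ = lam * φ x) :
    0 < ∫ x, φ x ∂μ ∧
    (∀ x, ((∫ x', φ x' ∂μ) / lam) * T1 x ≤ φ x) ∧
    (∀ x, φ x ≤ (1 / lam) * ψ x) ∧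
    (∀ x, ψ x / φ x ≤ c₁ * lam * lamHS / (∫ x', φ x' ∂μ)) ∧
    (∃ c₀ : ℝ, 0 < c₀ ∧ ∀ x, c₀ ≤ φ x) :=
  stmt17_general S μ κ hκmeas hκnonneg hκinf hmono₁ hmono₂ c₁ hc₁ T1 hT1 hTT hκ2 ψ hψ lamHS hlamHS0
    hHS lam φ hφnonneg hφL2 hφnorm hφeig
end

section
/- There exists a constant γ > 0 such that for all integers n ≥ 1, all real p with 0 < p < 1/4, and all integers k with 0 ≤ k ≤ n, the binomial probability satisfies C(n,k)·p^k·(1−p)^{n−k} ≤ (1 + γ·p²)^n · e^{−n p/(1−p)} · (n p/(1−p))^k / k! ; that is, P(Bin(n,p) = k) ≤ (1 + γ p²)^n · P(Po(n p/(1−p)) = k). -/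
/-!
Put `q = p / (1 - p)`, so that `p = q (1 - p)` and
`C(n,k) p^k (1-p)^(n-k) = C(n,k) q^k (1-p)^n ≤ (n q)^k / k! · (1-p)^n`.
It remains to compare `1 - p` with `e^{-q}`: from `1 - q ≤ e^{-q}` and
`(1 - p)² ≤ (1 + 3p²)(1 - 2p)` (equivalent to `2p²(1 - 3p) ≥ 0`) one gets
`1 - p ≤ (1 + 3p²) e^{-q}` for `p ≤ 1/3`, and raising this to the `n`-th power
turns `(1-p)^n` into `(1 + 3p²)^n e^{-nq}`.
-/

open Real

lemma one_sub_le_mul_exp_neg_div_one_sub {p : ℝ} (hp : p ≤ 1 / 3) :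
    1 - p ≤ (1 + 3 * p ^ 2) * exp (-(p / (1 - p))) := by
  have h1p : 0 < 1 - p := by linarith
  have hq : 1 - p / (1 - p) = (1 - 2 * p) / (1 - p) := by field_simp; ring
  calc 1 - p ≤ (1 + 3 * p ^ 2) * (1 - p / (1 - p)) := by
        rw [hq, ← mul_div_assoc, le_div_iff₀ h1p]
        nlinarith [mul_nonneg (sq_nonneg p) (by linarith : 0 ≤ 1 - 3 * p)]
    _ ≤ (1 + 3 * p ^ 2) * exp (-(p / (1 - p))) := by
        gcongr
        linarith [add_one_le_exp (-(p / (1 - p)))]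

lemma choose_mul_pow_mul_one_sub_pow_eq {p : ℝ} (hp : p ≠ 1) {n k : ℕ} (hk : k ≤ n) :
    (n.choose k : ℝ) * p ^ k * (1 - p) ^ (n - k) =
      (n.choose k : ℝ) * (p / (1 - p)) ^ k * (1 - p) ^ n := by
  have h1p : 1 - p ≠ 0 := sub_ne_zero.mpr hp.symm
  rw [div_pow, ← Nat.add_sub_cancel' hk, pow_add, Nat.add_sub_cancel_left]
  field_simp

lemma choose_mul_pow_mul_one_sub_pow_le_poisson {p c : ℝ} (hp0 : 0 ≤ p) (hp1 : p < 1)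
    (hc : 1 - p ≤ c * exp (-(p / (1 - p)))) {n k : ℕ} (hk : k ≤ n) :
    (n.choose k : ℝ) * p ^ k * (1 - p) ^ (n - k) ≤
      c ^ n * exp (-(n * p / (1 - p))) * (n * p / (1 - p)) ^ k / (k.factorial : ℝ) := by
  have h1p : 0 < 1 - p := by linarith
  set q := p / (1 - p)
  have hq : 0 ≤ q := div_nonneg hp0 h1p.le
  have hrhs : c ^ n * exp (-(n * p / (1 - p))) * (n * p / (1 - p)) ^ k / (k.factorial : ℝ) =
      (n : ℝ) ^ k / k.factorial * q ^ k * (c * exp (-q)) ^ n := by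
    rw [mul_div_assoc (n : ℝ), mul_pow, mul_pow, ← exp_nat_mul, ← mul_neg]
    ring
  rw [choose_mul_pow_mul_one_sub_pow_eq hp1.ne hk, hrhs]
  gcongr
  exact Nat.choose_le_pow_div k n

theorem stmt18 :
    ∃ γ : ℝ, 0 < γ ∧ ∀ n : ℕ, 1 ≤ n → ∀ p : ℝ, 0 < p → p < 1 / 4 →
      ∀ k : ℕ, k ≤ n →
        (n.choose k : ℝ) * p ^ k * (1 - p) ^ (n - k) ≤
          (1 + γ * p ^ 2) ^ n * Real.exp (-(n * p / (1 - p))) *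
            (n * p / (1 - p)) ^ k / (Nat.factorial k : ℝ) := by
  refine ⟨3, by norm_num, fun n _ p hp hp4 k hk => ?_⟩
  exact choose_mul_pow_mul_one_sub_pow_le_poisson hp.le (by linarith)
    (one_sub_le_mul_exp_neg_div_one_sub (by linarith)) hk
end
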